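/- (Strong amalgamation of {0,...,n}-valued metric spaces via truncated shortest path.) Let n ≥ 1. Let A and B be sets with A ∩ B = C, and let dA and dB be {0,...,n}-valued metrics on A and B respectively that agree on C. Define d on A ∪ B by: d extends dA on A and dB on B, and for a ∈ A \ C and b ∈ B \ C (in either order), d(a,b) = min(n, min_{c ∈ C}(dA(a,c) + dB(c,b))), where the inner minimum is taken to be n if C is empty. Then d is a {0,...,n}-valued metric on A ∪ B. -/
import Mathlib


open scoped Classical

/-- Strong amalgamation of `{0,…,n}`-valued metric spaces via truncated shortest path. -/
theorem strong_amalgamation_truncated_shortest_path {X : Type*} (n : ℕ) (hn : 1 ≤ n)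
    (A B : Set X) (dA dB : X → X → ℕ)
    (hAbd : ∀ x ∈ A, ∀ y ∈ A, dA x y ≤ n)
    (hAzero : ∀ x ∈ A, ∀ y ∈ A, (dA x y = 0 ↔ x = y))
    (hAsymm : ∀ x ∈ A, ∀ y ∈ A, dA x y = dA y x)
    (hAtri : ∀ x ∈ A, ∀ y ∈ A, ∀ z ∈ A, dA x z ≤ dA x y + dA y z)
    (hBbd : ∀ x ∈ B, ∀ y ∈ B, dB x y ≤ n)
    (hBzero : ∀ x ∈ B, ∀ y ∈ B, (dB x y = 0 ↔ x = y))
    (hBsymm : ∀ x ∈ B, ∀ y ∈ B, dB x y = dB y x)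
    (hBtri : ∀ x ∈ B, ∀ y ∈ B, ∀ z ∈ B, dB x z ≤ dB x y + dB y z)
    (hagree : ∀ x ∈ A ∩ B, ∀ y ∈ A ∩ B, dA x y = dB x y)
    (d : X → X → ℕ)
    (hdA : ∀ x ∈ A, ∀ y ∈ A, d x y = dA x y)
    (hdB : ∀ x ∈ B, ∀ y ∈ B, d x y = dB x y)
    (hcross : ∀ a ∈ A \ B, ∀ b ∈ B \ A,
      d a b = (if h : (A ∩ B).Nonempty then
          min n (sInf {m | ∃ c ∈ A ∩ B, m = dA a c + dB c b}) else n) ∧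
      d b a = d a b) :
    (∀ x ∈ A ∪ B, ∀ y ∈ A ∪ B, d x y ≤ n) ∧
    (∀ x ∈ A ∪ B, ∀ y ∈ A ∪ B, (d x y = 0 ↔ x = y)) ∧
    (∀ x ∈ A ∪ B, ∀ y ∈ A ∪ B, d x y = d y x) ∧
    (∀ x ∈ A ∪ B, ∀ y ∈ A ∪ B, ∀ z ∈ A ∪ B, d x z ≤ d x y + d y z) := by
  
  classical
  -- basic cross-distance facts
  have hval : ∀ a ∈ A \ B, ∀ b ∈ B \ A,
      d a b = (if h : (A ∩ B).Nonempty then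
          min n (sInf {m | ∃ c ∈ A ∩ B, m = dA a c + dB c b}) else n) :=
    fun a ha b hb => (hcross a ha b hb).1
  have hba : ∀ a ∈ A \ B, ∀ b ∈ B \ A, d b a = d a b :=
    fun a ha b hb => (hcross a ha b hb).2
  have hbd : ∀ a ∈ A \ B, ∀ b ∈ B \ A, d a b ≤ n := by
    intro a ha b hb
    rw [hval a ha b hb]
    split
    · exact min_le_left _ _
    · exact le_rfl
  have hle : ∀ a ∈ A \ B, ∀ b ∈ B \ A, ∀ c ∈ A ∩ B, d a b ≤ dA a c + dB c b := by
    intro a ha b hb c hc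
    rw [hval a ha b hb, dif_pos ⟨c, hc⟩]
    exact le_trans (min_le_right _ _) (Nat.sInf_le ⟨c, hc, rfl⟩)
  have hcase : ∀ a ∈ A \ B, ∀ b ∈ B \ A,
      d a b = n ∨ ∃ c ∈ A ∩ B, d a b = dA a c + dB c b := by
    intro a ha b hb
    rw [hval a ha b hb]
    by_cases h : (A ∩ B).Nonempty
    · rw [dif_pos h]
      have hne : {m | ∃ c ∈ A ∩ B, m = dA a c + dB c b}.Nonempty :=
        ⟨_, h.choose, h.choose_spec, rfl⟩
      have hmem := Nat.sInf_mem hne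
      rcases le_total n (sInf {m | ∃ c ∈ A ∩ B, m = dA a c + dB c b}) with h1 | h1
      · exact Or.inl (min_eq_left h1)
      · obtain ⟨c, hc, hc2⟩ := hmem
        exact Or.inr ⟨c, hc, by rw [min_eq_right h1, hc2]⟩
    · rw [dif_neg h]; exact Or.inl rfl
  have hpos : ∀ a ∈ A \ B, ∀ b ∈ B \ A, d a b ≠ 0 := by
    intro a ha b hb
    rcases hcase a ha b hb with h | ⟨c, hc, hc2⟩
    · omega
    · have h1 : dA a c ≠ 0 := fun h0 => ha.2 (by rw [(hAzero a ha.1 c hc.1).1 h0]; exact hc.2)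
      omega
  -- symmetry
  have dsymm : ∀ x ∈ A ∪ B, ∀ y ∈ A ∪ B, d x y = d y x := by
    intro x hx y hy
    by_cases hxA : x ∈ A <;> by_cases hyA : y ∈ A
    · rw [hdA x hxA y hyA, hdA y hyA x hxA, hAsymm x hxA y hyA]
    · have hyB : y ∈ B := hy.resolve_left hyA
      by_cases hxB : x ∈ B
      · rw [hdB x hxB y hyB, hdB y hyB x hxB, hBsymm x hxB y hyB]
      · exact (hba x ⟨hxA, hxB⟩ y ⟨hyB, hyA⟩).symm
    · have hxB : x ∈ B := hx.resolve_left hxA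
      by_cases hyB : y ∈ B
      · rw [hdB x hxB y hyB, hdB y hyB x hxB, hBsymm x hxB y hyB]
      · exact hba y ⟨hyA, hyB⟩ x ⟨hxB, hxA⟩
    · have hxB : x ∈ B := hx.resolve_left hxA
      have hyB : y ∈ B := hy.resolve_left hyA
      rw [hdB x hxB y hyB, hdB y hyB x hxB, hBsymm x hxB y hyB]
  -- triangle inequality, first when x ∈ A
  have triA : ∀ x ∈ A, ∀ y ∈ A ∪ B, ∀ z ∈ A ∪ B, d x z ≤ d x y + d y z := by
    intro x hxA y hy z hz
    by_cases hzA : z ∈ A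
    · -- x, z ∈ A
      by_cases hyA : y ∈ A
      · rw [hdA x hxA y hyA, hdA y hyA z hzA, hdA x hxA z hzA]
        exact hAtri x hxA y hyA z hzA
      · have hyB : y ∈ B := hy.resolve_left hyA
        by_cases hxB : x ∈ B <;> by_cases hzB : z ∈ B
        · rw [hdB x hxB y hyB, hdB y hyB z hzB, hdB x hxB z hzB]
          exact hBtri x hxB y hyB z hzB
        · -- x ∈ A∩B, z ∈ A\B, y ∈ B\A
          rw [hdA x hxA z hzA, hdB x hxB y hyB, hba z ⟨hzA, hzB⟩ y ⟨hyB, hyA⟩]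
          rcases hcase z ⟨hzA, hzB⟩ y ⟨hyB, hyA⟩ with h | ⟨c, hc, he⟩
          · have h1 := hAbd x hxA z hzA
            omega
          · rw [he]
            have t1 := hAtri x hxA c hc.1 z hzA
            have t2 := hagree x ⟨hxA, hxB⟩ c hc
            have t3 := hBtri x hxB y hyB c hc.2
            have t4 := hBsymm y hyB c hc.2
            have t5 := hAsymm c hc.1 z hzA
            omega
        · -- x ∈ A\B, z ∈ A∩B, y ∈ B\A
          rw [hdA x hxA z hzA, hdB y hyB z hzB]
          rcases hcase x ⟨hxA, hxB⟩ y ⟨hyB, hyA⟩ with h | ⟨c, hc, he⟩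
          · have h1 := hAbd x hxA z hzA
            omega
          · rw [he]
            have t1 := hAtri x hxA c hc.1 z hzA
            have t2 := hagree c hc z ⟨hzA, hzB⟩
            have t3 := hBtri c hc.2 y hyB z hzB
            omega
        · -- x, z ∈ A\B, y ∈ B\A
          rw [hdA x hxA z hzA, hba z ⟨hzA, hzB⟩ y ⟨hyB, hyA⟩]
          rcases hcase x ⟨hxA, hxB⟩ y ⟨hyB, hyA⟩ with h | ⟨c, hc, he⟩
          · have h1 := hAbd x hxA z hzA
            have h2 := hpos z ⟨hzA, hzB⟩ y ⟨hyB, hyA⟩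
            omega
          · rcases hcase z ⟨hzA, hzB⟩ y ⟨hyB, hyA⟩ with h2 | ⟨c', hc', he2⟩
            · have h1 := hAbd x hxA z hzA
              omega
            · rw [he, he2]
              have t1 := hAtri x hxA c hc.1 z hzA
              have t2 := hAtri c hc.1 c' hc'.1 z hzA
              have t3 := hagree c hc c' hc'
              have t4 := hBtri c hc.2 y hyB c' hc'.2
              have t5 := hBsymm y hyB c' hc'.2
              have t6 := hAsymm c' hc'.1 z hzA
              omega
    · -- x ∈ A, z ∈ B \ A
      have hzB : z ∈ B := hz.resolve_left hzA
      by_cases hxB : x ∈ B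
      · -- x ∈ A∩B, z ∈ B\A
        by_cases hyB : y ∈ B
        · rw [hdB x hxB y hyB, hdB y hyB z hzB, hdB x hxB z hzB]
          exact hBtri x hxB y hyB z hzB
        · have hyA : y ∈ A := hy.resolve_right hyB
          rw [hdB x hxB z hzB, hdA x hxA y hyA]
          rcases hcase y ⟨hyA, hyB⟩ z ⟨hzB, hzA⟩ with h | ⟨c, hc, he⟩
          · have h1 := hBbd x hxB z hzB
            omega
          · rw [he]
            have t1 := hBtri x hxB c hc.2 z hzB
            have t2 := hagree x ⟨hxA, hxB⟩ c hc
            have t3 := hAtri x hxA y hyA c hc.1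
            omega
      · -- x ∈ A\B, z ∈ B\A : cross pair
        by_cases hyA : y ∈ A
        · by_cases hyB : y ∈ B
          · rw [hdA x hxA y hyA, hdB y hyB z hzB]
            exact hle x ⟨hxA, hxB⟩ z ⟨hzB, hzA⟩ y ⟨hyA, hyB⟩
          · -- y ∈ A\B
            rw [hdA x hxA y hyA]
            rcases hcase y ⟨hyA, hyB⟩ z ⟨hzB, hzA⟩ with h | ⟨c, hc, he⟩
            · have h1 := hbd x ⟨hxA, hxB⟩ z ⟨hzB, hzA⟩
              omega
            · rw [he]
              have t1 := hle x ⟨hxA, hxB⟩ z ⟨hzB, hzA⟩ c hc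
              have t2 := hAtri x hxA y hyA c hc.1
              omega
        · -- y ∈ B\A
          have hyB : y ∈ B := hy.resolve_left hyA
          rw [hdB y hyB z hzB]
          rcases hcase x ⟨hxA, hxB⟩ y ⟨hyB, hyA⟩ with h | ⟨c, hc, he⟩
          · have h1 := hbd x ⟨hxA, hxB⟩ z ⟨hzB, hzA⟩
            omega
          · rw [he]
            have t1 := hle x ⟨hxA, hxB⟩ z ⟨hzB, hzA⟩ c hc
            have t2 := hBtri c hc.2 y hyB z hzB
            omega
  have tri : ∀ x ∈ A ∪ B, ∀ y ∈ A ∪ B, ∀ z ∈ A ∪ B, d x z ≤ d x y + d y z := by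
    intro x hx y hy z hz
    by_cases hxA : x ∈ A
    · exact triA x hxA y hy z hz
    · have hxB : x ∈ B := hx.resolve_left hxA
      by_cases hzA : z ∈ A
      · have h1 := triA z hzA y hy x hx
        rw [dsymm x hx z hz, dsymm x hx y hy, dsymm y hy z hz]
        omega
      · -- x, z ∈ B \ A
        have hzB : z ∈ B := hz.resolve_left hzA
        by_cases hyB : y ∈ B
        · rw [hdB x hxB y hyB, hdB y hyB z hzB, hdB x hxB z hzB]
          exact hBtri x hxB y hyB z hzB
        · -- y ∈ A\B, x, z ∈ B\A
          have hyA : y ∈ A := hy.resolve_right hyB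
          rw [hdB x hxB z hzB, hba y ⟨hyA, hyB⟩ x ⟨hxB, hxA⟩]
          rcases hcase y ⟨hyA, hyB⟩ x ⟨hxB, hxA⟩ with h | ⟨c, hc, he⟩
          · have h1 := hBbd x hxB z hzB
            have h2 := hpos y ⟨hyA, hyB⟩ z ⟨hzB, hzA⟩
            omega
          · rcases hcase y ⟨hyA, hyB⟩ z ⟨hzB, hzA⟩ with h2 | ⟨c', hc', he2⟩
            · have h1 := hBbd x hxB z hzB
              omega
            · rw [he, he2]
              have t1 := hBtri x hxB c hc.2 z hzB
              have t2 := hBsymm x hxB c hc.2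
              have t3 := hBtri c hc.2 c' hc'.2 z hzB
              have t4 := hagree c hc c' hc'
              have t5 := hAtri c hc.1 y hyA c' hc'.1
              have t6 := hAsymm c hc.1 y hyA
              have t7 := hBsymm c hc.2 x hxB
              omega
  refine ⟨?_, ?_, dsymm, tri⟩
  · -- bound
    intro x hx y hy
    by_cases hxA : x ∈ A <;> by_cases hyA : y ∈ A
    · rw [hdA x hxA y hyA]; exact hAbd x hxA y hyA
    · have hyB : y ∈ B := hy.resolve_left hyA
      by_cases hxB : x ∈ B
      · rw [hdB x hxB y hyB]; exact hBbd x hxB y hyB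
      · exact hbd x ⟨hxA, hxB⟩ y ⟨hyB, hyA⟩
    · have hxB : x ∈ B := hx.resolve_left hxA
      by_cases hyB : y ∈ B
      · rw [hdB x hxB y hyB]; exact hBbd x hxB y hyB
      · rw [hba y ⟨hyA, hyB⟩ x ⟨hxB, hxA⟩]
        exact hbd y ⟨hyA, hyB⟩ x ⟨hxB, hxA⟩
    · have hxB : x ∈ B := hx.resolve_left hxA
      have hyB : y ∈ B := hy.resolve_left hyA
      rw [hdB x hxB y hyB]; exact hBbd x hxB y hyB
  · -- zero iff
    intro x hx y hy
    by_cases hxA : x ∈ A <;> by_cases hyA : y ∈ A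
    · rw [hdA x hxA y hyA]; exact hAzero x hxA y hyA
    · have hyB : y ∈ B := hy.resolve_left hyA
      by_cases hxB : x ∈ B
      · rw [hdB x hxB y hyB]; exact hBzero x hxB y hyB
      · exact ⟨fun h0 => absurd h0 (hpos x ⟨hxA, hxB⟩ y ⟨hyB, hyA⟩),
          fun h => by subst h; exact absurd hyB hxB⟩
    · have hxB : x ∈ B := hx.resolve_left hxA
      by_cases hyB : y ∈ B
      · rw [hdB x hxB y hyB]; exact hBzero x hxB y hyB
      · refine ⟨fun h0 => ?_, fun h => by subst h; exact absurd hxB hyB⟩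
        rw [hba y ⟨hyA, hyB⟩ x ⟨hxB, hxA⟩] at h0
        exact absurd h0 (hpos y ⟨hyA, hyB⟩ x ⟨hxB, hxA⟩)
    · have hxB : x ∈ B := hx.resolve_left hxA
      have hyB : y ∈ B := hy.resolve_left hyA
      rw [hdB x hxB y hyB]; exact hBzero x hxB y hyB
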